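/- arXiv:1309.4709 — 3 statements merged into one kernel-verified Lean document; each statement's English description precedes it below -/
import Mathlib

section
/- Let n ≥ 1 be an integer. Then the operator norm ‖P_U (P_V P_U)^n − P_{U∩V}‖ equals c_F^{2n}, where c_F is the cosine of the Friedrichs angle between U and V. (Odd powers of alternating projections.) -/
noncomputable section

variable {X : Type*} [NormedAddCommGroup X] [InnerProductSpace ℝ X] [CompleteSpace X]

/-- The orthogonal projection onto a closed subspace `W`, as an operator on `X`. -/
noncomputable def proj (W : Submodule ℝ X) [Submodule.HasOrthogonalProjection W] : X →L[ℝ] X :=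
  W.subtypeL.comp (W.orthogonalProjectionOnto)

instance infHOP (U V : Submodule ℝ X) [CompleteSpace U] [CompleteSpace V] :
    Submodule.HasOrthogonalProjection (U ⊓ V) := by
  have hU : IsClosed (U : Set X) := (completeSpace_coe_iff_isComplete.mp ‹_›).isClosed
  have hV : IsClosed (V : Set X) := (completeSpace_coe_iff_isComplete.mp ‹_›).isClosed
  have : CompleteSpace (U ⊓ V : Submodule ℝ X) := (hU.inter hV).completeSpace_coe
  infer_instance

/-- The fixed point set `Fix T = {x | T x = x}` of a continuous linear operator `T`,
as a submodule of `X`. -/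
noncomputable def fixedSpace (T : X →L[ℝ] X) : Submodule ℝ X := LinearMap.ker ((T - 1 : X →L[ℝ] X) : X →ₗ[ℝ] X)

instance fixedSpaceHOP (T : X →L[ℝ] X) : Submodule.HasOrthogonalProjection (fixedSpace T) := by
  have h : IsClosed ((fixedSpace T : Submodule ℝ X) : Set X) := by
    have : ((fixedSpace T : Submodule ℝ X) : Set X) = {x | T x = x} := by
      ext x; simp [fixedSpace, LinearMap.mem_ker, sub_eq_zero]
    rw [this]
    exact isClosed_eq T.continuous continuous_id
  have : CompleteSpace (fixedSpace T) := h.completeSpace_coe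
  infer_instance

/-- The reflector `R_W = 2 P_W − Id` associated with `W`. -/
noncomputable def reflector (W : Submodule ℝ X) [Submodule.HasOrthogonalProjection W] : X →L[ℝ] X :=
  2 • proj W - 1

/-- The Douglas–Rachford operator `T = T_{V,U} = P_V (2 P_U − Id) + Id − P_U`.
(The first argument is `U`, the second is `V`.) -/
noncomputable def drOperator (U V : Submodule ℝ X) [Submodule.HasOrthogonalProjection U]
    [Submodule.HasOrthogonalProjection V] : X →L[ℝ] X :=
  proj V * (2 • proj U - 1) + 1 - proj U

/-- The cosine of the Friedrichs angle between `U` and `V`. -/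
noncomputable def friedrichs (U V : Submodule ℝ X) : ℝ :=
  sSup {c : ℝ | ∃ u v : X, u ∈ U ⊓ (U ⊓ V)ᗮ ∧ v ∈ V ⊓ (U ⊓ V)ᗮ ∧
    ‖u‖ ≤ 1 ∧ ‖v‖ ≤ 1 ∧ c = inner ℝ u v}

/-!
With `R = U ⊓ V`, the operator `B = P_V P_U - P_R` is the product `P_{V ⊓ Rᗮ} P_{U ⊓ Rᗮ}`, and the
norm of a product of two orthogonal projections is the cosine of the (Dixmier) angle between their
ranges, so `‖B‖ = c_F`. Since `P_R` is absorbed by `P_U` and `P_V` on either side,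
`B⋆ B = P_U P_V P_U - P_R` and `(B⋆ B)ⁿ = P_U (P_V P_U)ⁿ - P_R`. Finally `B⋆ B` is self-adjoint, so
the C⋆-identity gives `‖(B⋆ B)ⁿ‖ = ‖B⋆ B‖ⁿ = ‖B‖²ⁿ`.
-/

section Algebra

variable {R : Type*}

lemma IsIdempotentElem.mul_mul_pow [Monoid R] {a : R} (ha : IsIdempotentElem a) (b : R) {n : ℕ}
    (hn : n ≠ 0) : (a * (b * a)) ^ n = a * (b * a) ^ n := by
  obtain ⟨k, rfl⟩ := Nat.exists_eq_add_one_of_ne_zero hn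
  rw [pow_succ, ← mul_assoc, mul_pow_mul, mul_assoc b a a, ha.eq, mul_assoc, ← pow_succ]

lemma sub_pow_of_mul_eq_of_mul_eq [Ring R] {t r : R} (htr : t * r = r) (hrt : r * t = r)
    (hr : IsIdempotentElem r) {n : ℕ} (hn : n ≠ 0) : (t - r) ^ n = t ^ n - r := by
  have hcomm : Commute t (1 - r) := by
    simp only [Commute, SemiconjBy, mul_sub, sub_mul, mul_one, one_mul, htr, hrt]
  have hpow : ∀ k : ℕ, t ^ k * r = r := fun k => by
    induction k with
    | zero => rw [pow_zero, one_mul]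
    | succ k ih => rw [pow_succ', mul_assoc, ih, htr]
  calc (t - r) ^ n = (t * (1 - r)) ^ n := by rw [mul_sub, mul_one, htr]
    _ = t ^ n * (1 - r) := by rw [hcomm.mul_pow, hr.one_sub.pow_eq hn]
    _ = t ^ n - r := by rw [mul_sub, mul_one, hpow]

lemma norm_pow_eq_of_lt [NormedRing R] {a : R} {m n : ℕ} (hn : 0 < n) (hnm : n < m)
    (hm : ‖a ^ m‖ = ‖a‖ ^ m) : ‖a ^ n‖ = ‖a‖ ^ n := by
  refine le_antisymm (norm_pow_le' a hn) ?_
  rcases (norm_nonneg a).eq_or_lt with ha | ha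
  · rw [← ha, zero_pow hn.ne']
    exact norm_nonneg _
  have hsplit : a ^ m = a ^ n * a ^ (m - n) := by rw [← pow_add, Nat.add_sub_cancel' hnm.le]
  have key : ‖a‖ ^ n * ‖a‖ ^ (m - n) ≤ ‖a ^ n‖ * ‖a‖ ^ (m - n) :=
    calc ‖a‖ ^ n * ‖a‖ ^ (m - n) = ‖a ^ m‖ := by rw [← pow_add, Nat.add_sub_cancel' hnm.le, hm]
      _ ≤ ‖a ^ n‖ * ‖a ^ (m - n)‖ := hsplit ▸ norm_mul_le _ _
      _ ≤ ‖a ^ n‖ * ‖a‖ ^ (m - n) := by gcongr; exact norm_pow_le' a (by omega)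
  exact le_of_mul_le_mul_right key (pow_pos ha _)

lemma IsSelfAdjoint.norm_pow [NormedRing R] [StarRing R] [CStarRing R] {a : R}
    (ha : IsSelfAdjoint a) {n : ℕ} (hn : n ≠ 0) : ‖a ^ n‖ = ‖a‖ ^ n :=
  norm_pow_eq_of_lt (Nat.pos_of_ne_zero hn) n.lt_two_pow_self (ha.norm_pow_two_pow n)

end Algebra

section Projection

variable {E : Type*} [NormedAddCommGroup E] [InnerProductSpace ℝ E]

lemma proj_eq_starProjection (W : Submodule ℝ E) [W.HasOrthogonalProjection] :
    proj W = W.starProjection :=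
  rfl

lemma isIdempotentElem_proj (W : Submodule ℝ E) [W.HasOrthogonalProjection] :
    IsIdempotentElem (proj W) :=
  W.isIdempotentElem_starProjection

lemma proj_mul_proj_eq_right {R W : Submodule ℝ E} [R.HasOrthogonalProjection]
    [W.HasOrthogonalProjection] (h : R ≤ W) : proj W * proj R = proj R := by
  ext x
  exact Submodule.starProjection_eq_self_iff.mpr (h (R.starProjection_apply_mem x))

lemma proj_mul_proj_eq_left {R W : Submodule ℝ E} [R.HasOrthogonalProjection]
    [W.HasOrthogonalProjection] (h : R ≤ W) : proj R * proj W = proj R :=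
  Submodule.starProjection_comp_starProjection_of_le h

lemma proj_sub_proj_of_le {R W : Submodule ℝ E} [R.HasOrthogonalProjection]
    [W.HasOrthogonalProjection] [(W ⊓ Rᗮ).HasOrthogonalProjection] (h : R ≤ W) :
    proj W - proj R = proj (W ⊓ Rᗮ) := by
  ext x
  refine (Submodule.eq_starProjection_of_mem_orthogonal (Submodule.mem_inf.mpr ⟨?_, ?_⟩) ?_).symm
  · exact sub_mem (W.starProjection_apply_mem x) (h (R.starProjection_apply_mem x))
  · rw [sub_apply, ← proj_mul_proj_eq_left h]
    exact Submodule.sub_starProjection_mem_orthogonal _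
  · rw [sub_apply, sub_sub_eq_add_sub, add_sub_right_comm]
    exact add_mem
      (Submodule.orthogonal_le inf_le_left (Submodule.sub_starProjection_mem_orthogonal x))
      (Submodule.orthogonal_le inf_le_right
        (Submodule.le_orthogonal_orthogonal R (R.starProjection_apply_mem x)))

lemma proj_mul_proj_sub_proj_inf (U V : Submodule ℝ E) [U.HasOrthogonalProjection]
    [V.HasOrthogonalProjection] [(U ⊓ V).HasOrthogonalProjection]
    [(U ⊓ (U ⊓ V)ᗮ).HasOrthogonalProjection] [(V ⊓ (U ⊓ V)ᗮ).HasOrthogonalProjection] :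
    proj V * proj U - proj (U ⊓ V) = proj (V ⊓ (U ⊓ V)ᗮ) * proj (U ⊓ (U ⊓ V)ᗮ) := by
  rw [← proj_sub_proj_of_le inf_le_left, ← proj_sub_proj_of_le inf_le_right, sub_mul, mul_sub,
    mul_sub, proj_mul_proj_eq_right inf_le_right, proj_mul_proj_eq_left inf_le_left,
    (isIdempotentElem_proj _).eq]
  abel

lemma proj_sub_proj_inf_mul_proj_sub_proj_inf (U V : Submodule ℝ E) [U.HasOrthogonalProjection]
    [V.HasOrthogonalProjection] [(U ⊓ V).HasOrthogonalProjection] :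
    (proj U * proj V - proj (U ⊓ V)) * (proj V * proj U - proj (U ⊓ V)) =
      proj U * (proj V * proj U) - proj (U ⊓ V) := by
  have hUV : proj U * proj V * proj (U ⊓ V) = proj (U ⊓ V) := by
    rw [mul_assoc, proj_mul_proj_eq_right inf_le_right, proj_mul_proj_eq_right inf_le_left]
  have hVU : proj (U ⊓ V) * (proj V * proj U) = proj (U ⊓ V) := by
    rw [← mul_assoc, proj_mul_proj_eq_left inf_le_right, proj_mul_proj_eq_left inf_le_left]
  rw [mul_sub, sub_mul, sub_mul, hUV, hVU, (isIdempotentElem_proj _).eq, mul_assoc,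
    ← mul_assoc (proj V), (isIdempotentElem_proj _).eq]
  abel

lemma proj_mul_proj_mul_proj_sub_proj_inf_pow (U V : Submodule ℝ E) [U.HasOrthogonalProjection]
    [V.HasOrthogonalProjection] [(U ⊓ V).HasOrthogonalProjection] {n : ℕ} (hn : n ≠ 0) :
    (proj U * (proj V * proj U) - proj (U ⊓ V)) ^ n =
      proj U * (proj V * proj U) ^ n - proj (U ⊓ V) := by
  rw [sub_pow_of_mul_eq_of_mul_eq ?_ ?_ (isIdempotentElem_proj _) hn,
    (isIdempotentElem_proj U).mul_mul_pow _ hn]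
  · rw [mul_assoc, mul_assoc, proj_mul_proj_eq_right inf_le_left,
      proj_mul_proj_eq_right inf_le_right, proj_mul_proj_eq_right inf_le_left]
  · rw [← mul_assoc, ← mul_assoc, proj_mul_proj_eq_left inf_le_left,
      proj_mul_proj_eq_left inf_le_right, proj_mul_proj_eq_left inf_le_left]

end Projection

section DixmierAngle

variable {E : Type*} [NormedAddCommGroup E] [InnerProductSpace ℝ E]

/-- The cosine `c₀(A, C)` of the Dixmier angle; `friedrichs U V` is by definition
`dixmierCos (U ⊓ (U ⊓ V)ᗮ) (V ⊓ (U ⊓ V)ᗮ)`. -/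
def dixmierCos (A C : Submodule ℝ E) : ℝ :=
  sSup {c : ℝ | ∃ u v : E, u ∈ A ∧ v ∈ C ∧ ‖u‖ ≤ 1 ∧ ‖v‖ ≤ 1 ∧ c = inner ℝ u v}

variable {A C : Submodule ℝ E}

lemma inner_le_dixmierCos {u v : E} (hu : u ∈ A) (hv : v ∈ C) (hu1 : ‖u‖ ≤ 1) (hv1 : ‖v‖ ≤ 1) :
    inner ℝ u v ≤ dixmierCos A C := by
  refine le_csSup ⟨1, ?_⟩ ⟨u, v, hu, hv, hu1, hv1, rfl⟩
  rintro _ ⟨u, v, -, -, hu1, hv1, rfl⟩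
  exact (real_inner_le_norm u v).trans (mul_le_one₀ hu1 (norm_nonneg v) hv1)

lemma dixmierCos_nonneg : 0 ≤ dixmierCos A C := by
  simpa using inner_le_dixmierCos (zero_mem A) (zero_mem C) (by simp) (by simp)

lemma inner_le_dixmierCos_mul {u v : E} (hu : u ∈ A) (hv : v ∈ C) :
    inner ℝ u v ≤ dixmierCos A C * (‖u‖ * ‖v‖) := by
  rcases eq_or_ne u 0 with rfl | hu0
  · simp
  rcases eq_or_ne v 0 with rfl | hv0
  · simp
  have h := inner_le_dixmierCos (A.smul_mem ‖u‖⁻¹ hu) (C.smul_mem ‖v‖⁻¹ hv)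
    (norm_smul_inv_norm hu0).le (norm_smul_inv_norm hv0).le
  rw [real_inner_smul_left, real_inner_smul_right, ← mul_assoc, ← mul_inv,
    inv_mul_le_iff₀ (by positivity)] at h
  linarith

variable [A.HasOrthogonalProjection] [C.HasOrthogonalProjection]

lemma norm_proj_proj_apply_le (x : E) : ‖proj C (proj A x)‖ ≤ dixmierCos A C * ‖x‖ := by
  set y := proj C (proj A x) with hy
  have hsq : ‖y‖ * ‖y‖ ≤ dixmierCos A C * ‖x‖ * ‖y‖ :=
    calc ‖y‖ * ‖y‖ = inner ℝ (proj A x) y := by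
          rw [← real_inner_self_eq_norm_mul_norm, hy, proj_eq_starProjection C,
            Submodule.inner_starProjection_left_eq_right, ← mul_apply_eq_comp,
            C.isIdempotentElem_starProjection.eq]
      _ ≤ dixmierCos A C * (‖proj A x‖ * ‖y‖) :=
          inner_le_dixmierCos_mul (A.starProjection_apply_mem x) (C.starProjection_apply_mem _)
      _ ≤ dixmierCos A C * ‖x‖ * ‖y‖ := by
          rw [← mul_assoc]
          gcongr
          · exact dixmierCos_nonneg
          · exact A.norm_starProjection_apply_le x
  rcases (norm_nonneg y).eq_or_lt with h0 | hpos
  · rw [← h0]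
    exact mul_nonneg dixmierCos_nonneg (norm_nonneg x)
  · exact le_of_mul_le_mul_right hsq hpos

lemma dixmierCos_le_norm_proj_mul_proj : dixmierCos A C ≤ ‖proj C * proj A‖ := by
  refine csSup_le ⟨0, 0, 0, zero_mem A, zero_mem C, by simp, by simp, by simp⟩ ?_
  rintro _ ⟨u, v, hu, hv, hu1, hv1, rfl⟩
  calc inner ℝ u v = inner ℝ ((proj C * proj A) u) v := by
        rw [mul_apply_eq_comp, proj_eq_starProjection, proj_eq_starProjection,
          Submodule.starProjection_eq_self_iff.mpr hu, Submodule.inner_starProjection_left_eq_right,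
          Submodule.starProjection_eq_self_iff.mpr hv]
    _ ≤ ‖(proj C * proj A) u‖ * ‖v‖ := real_inner_le_norm _ _
    _ ≤ ‖proj C * proj A‖ * 1 * 1 := by
        gcongr
        exact (proj C * proj A).le_opNorm_of_le hu1
    _ = ‖proj C * proj A‖ := by ring

lemma norm_proj_mul_proj : ‖proj C * proj A‖ = dixmierCos A C :=
  le_antisymm (ContinuousLinearMap.opNorm_le_bound _ dixmierCos_nonneg norm_proj_proj_apply_le)
    dixmierCos_le_norm_proj_mul_proj

end DixmierAngle

section AlternatingProjections

variable (U V : Submodule ℝ X) [CompleteSpace U] [CompleteSpace V]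

lemma norm_proj_mul_proj_sub_proj_inf :
    ‖proj V * proj U - proj (U ⊓ V)‖ = friedrichs U V := by
  rw [proj_mul_proj_sub_proj_inf]
  exact norm_proj_mul_proj

lemma star_proj_mul_proj_sub_proj_inf :
    star (proj V * proj U - proj (U ⊓ V)) = proj U * proj V - proj (U ⊓ V) := by
  simp only [proj_eq_starProjection, star_sub, star_mul, (isSelfAdjoint_starProjection _).star_eq]

end AlternatingProjections

/-- odd powers of alternating projections:
`‖P_U (P_V P_U)^n − P_{U∩V}‖ = c_F^{2n}` for every integer `n ≥ 1`. -/
theorem odd_powers_alternating_projections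
    (U V : Submodule ℝ X) [CompleteSpace U] [CompleteSpace V] (n : ℕ) (hn : 1 ≤ n) :
    ‖proj U * (proj V * proj U) ^ n - proj (U ⊓ V)‖ = friedrichs U V ^ (2 * n) := by
  have hn0 : n ≠ 0 := Nat.one_le_iff_ne_zero.mp hn
  set B := proj V * proj U - proj (U ⊓ V)
  have hB : star B * B = proj U * (proj V * proj U) - proj (U ⊓ V) := by
    rw [star_proj_mul_proj_sub_proj_inf, proj_sub_proj_inf_mul_proj_sub_proj_inf]
  calc ‖proj U * (proj V * proj U) ^ n - proj (U ⊓ V)‖ = ‖(star B * B) ^ n‖ := by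
        rw [hB, proj_mul_proj_mul_proj_sub_proj_inf_pow U V hn0]
    _ = ‖star B * B‖ ^ n := (IsSelfAdjoint.star_mul_self B).norm_pow hn0
    _ = (‖B‖ * ‖B‖) ^ n := congrArg (· ^ n) CStarRing.norm_star_mul_self
    _ = friedrichs U V ^ (2 * n) := by
        rw [norm_proj_mul_proj_sub_proj_inf, ← sq, pow_mul]
end
end

section
/- The Douglas–Rachford operator T satisfies 2 T T* = T + T*. -/
noncomputable section

variable {X : Type*} [NormedAddCommGroup X] [InnerProductSpace ℝ X] [CompleteSpace X]

/-! For star projections `P`, `Q` in any star ring, `T = Q(2P - 1) + 1 - P` has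
`T* = (2P - 1)Q + 1 - P`. Idempotency of `P` gives `(2P - 1)² = 1` and
`(2P - 1)(1 - P) = (1 - P)(2P - 1) = P - 1`, so expanding the product yields
`T T* = QP + PQ - Q + 1 - P`, which is half of `T + T*`. -/

def douglasRachford {R : Type*} [Ring R] (p q : R) : R := q * (2 • p - 1) + 1 - p

namespace IsIdempotentElem

variable {R : Type*} [Ring R] {p q : R}

lemma two_nsmul_sub_one_mul_one_sub (hp : IsIdempotentElem p) :
    (2 • p - 1) * (1 - p) = p - 1 := by
  simp only [two_nsmul, sub_mul, add_mul, mul_sub, hp.eq, mul_one, one_mul]; abel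

lemma one_sub_mul_two_nsmul_sub_one (hp : IsIdempotentElem p) :
    (1 - p) * (2 • p - 1) = p - 1 := by
  simp only [two_nsmul, sub_mul, mul_add, mul_sub, hp.eq, mul_one, one_mul]; abel

lemma two_nsmul_sub_one_mul_self (hp : IsIdempotentElem p) :
    (2 • p - 1) * (2 • p - 1) = 1 := by
  simp only [two_nsmul, sub_mul, add_mul, mul_add, mul_sub, hp.eq, mul_one, one_mul]; abel

theorem two_nsmul_douglasRachford_mul (hp : IsIdempotentElem p) (hq : IsIdempotentElem q) :
    2 • (douglasRachford p q * ((2 • p - 1) * q + 1 - p)) =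
      douglasRachford p q + ((2 • p - 1) * q + 1 - p) := by
  have hprod :
      douglasRachford p q * ((2 • p - 1) * q + 1 - p) = q * p + p * q - q + 1 - p := by
    calc douglasRachford p q * ((2 • p - 1) * q + 1 - p)
        = (q * (2 • p - 1) + (1 - p)) * ((2 • p - 1) * q + (1 - p)) := by
          simp only [douglasRachford, add_sub_assoc]
      _ = q * ((2 • p - 1) * (2 • p - 1)) * q + q * ((2 • p - 1) * (1 - p))
            + (1 - p) * (2 • p - 1) * q + (1 - p) * (1 - p) := by
          simp only [add_mul, mul_add, mul_assoc]; abel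
      _ = q * p + p * q - q + 1 - p := by
          rw [hp.two_nsmul_sub_one_mul_self, hp.two_nsmul_sub_one_mul_one_sub,
            hp.one_sub_mul_two_nsmul_sub_one, hp.one_sub.eq, mul_one, hq.eq]
          simp only [mul_sub, sub_mul, mul_one, one_mul]; abel
  rw [hprod, douglasRachford]
  simp only [two_nsmul, mul_sub, sub_mul, mul_add, add_mul, mul_one, one_mul]; abel

end IsIdempotentElem

lemma IsSelfAdjoint.star_douglasRachford {R : Type*} [Ring R] [StarRing R] {p q : R}
    (hp : IsSelfAdjoint p) (hq : IsSelfAdjoint q) :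
    star (douglasRachford p q) = (2 • p - 1) * q + 1 - p := by
  simp only [douglasRachford, star_sub, star_add, star_mul, star_nsmul, star_one, hp.star_eq,
    hq.star_eq]

theorem IsStarProjection.two_nsmul_douglasRachford_mul_star {R : Type*} [Ring R] [StarRing R]
    {p q : R} (hp : IsStarProjection p) (hq : IsStarProjection q) :
    2 • (douglasRachford p q * star (douglasRachford p q)) =
      douglasRachford p q + star (douglasRachford p q) := by
  rw [hp.isSelfAdjoint.star_douglasRachford hq.isSelfAdjoint]
  exact hp.isIdempotentElem.two_nsmul_douglasRachford_mul hq.isIdempotentElem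

/-- `2 T T* = T + T*`. -/
theorem drOperator_two_mul_self_adjoint
    (U V : Submodule ℝ X) [CompleteSpace U] [CompleteSpace V] :
    2 • (drOperator U V * ContinuousLinearMap.adjoint (drOperator U V)) =
      drOperator U V + ContinuousLinearMap.adjoint (drOperator U V) := by
  rw [← ContinuousLinearMap.star_eq_adjoint]
  exact isStarProjection_starProjection.two_nsmul_douglasRachford_mul_star
    isStarProjection_starProjection
end
end

section
/- The Douglas–Rachford operator T satisfies T T* = P_V P_U P_V + P_{V^⊥} P_{U^⊥} P_{V^⊥} = P_V P_U + P_U P_V − P_U − P_V + Id = P_U P_V P_U + P_{U^⊥} P_{V^⊥} P_{U^⊥}. -/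
noncomputable section

variable {X : Type*} [NormedAddCommGroup X] [InnerProductSpace ℝ X] [CompleteSpace X]

/-!
With `P = P_U`, `Q = P_V` and the reflector `R = 2P - 1` we have `T = QR + (1 - P)` and
`T* = RQ + (1 - P)`. Since `R² = 1` and `R(1 - P) = (1 - P)R = -(1 - P)`, this gives
`TT* = Q - Q(1 - P) - (1 - P)Q + (1 - P) = QP + PQ - P - Q + 1`. Expanding
`QPQ + (1 - Q)(1 - P)(1 - Q)` with `Q² = Q` gives the same expression, which is symmetric in `P`
and `Q`; and `P_{W^⊥} = 1 - P_W`.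
-/

section Ring

variable {R : Type*} [Ring R] {p q : R}

lemma IsIdempotentElem.two_nsmul_sub_one_mul_self_s7 (hp : IsIdempotentElem p) :
    (2 • p - 1) * (2 • p - 1) = 1 := by
  have hpp : p * p = p := hp
  noncomm_ring
  rw [hpp]
  abel

lemma IsIdempotentElem.two_nsmul_sub_one_mul_one_sub_s7 (hp : IsIdempotentElem p) :
    (2 • p - 1) * (1 - p) = -(1 - p) := by
  rw [sub_mul, smul_mul_assoc, hp.mul_one_sub_self, smul_zero, one_mul, zero_sub]

lemma IsIdempotentElem.one_sub_mul_two_nsmul_sub_one_s7 (hp : IsIdempotentElem p) :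
    (1 - p) * (2 • p - 1) = -(1 - p) := by
  rw [mul_sub, mul_smul_comm, hp.one_sub_mul_self, smul_zero, mul_one, zero_sub]

-- With `p = P_U`, `q = P_V` the two factors are `drOperator U V` and its adjoint.
lemma IsIdempotentElem.dr_mul_dr_transpose (hp : IsIdempotentElem p) (hq : IsIdempotentElem q) :
    (q * (2 • p - 1) + 1 - p) * ((2 • p - 1) * q + 1 - p) = q * p + p * q - p - q + 1 :=
  calc (q * (2 • p - 1) + 1 - p) * ((2 • p - 1) * q + 1 - p)
      = q * ((2 • p - 1) * (2 • p - 1)) * q + q * ((2 • p - 1) * (1 - p))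
          + (1 - p) * (2 • p - 1) * q + (1 - p) * (1 - p) := by noncomm_ring
    _ = q * q - q * (1 - p) - (1 - p) * q + (1 - p) * (1 - p) := by
        rw [hp.two_nsmul_sub_one_mul_self_s7, hp.two_nsmul_sub_one_mul_one_sub_s7,
          hp.one_sub_mul_two_nsmul_sub_one_s7]
        noncomm_ring
    _ = q * p + p * q - p - q + 1 := by
        rw [hq.eq, hp.one_sub.eq]
        noncomm_ring

lemma IsIdempotentElem.mul_mul_self_add_one_sub_mul_mul_one_sub (hq : IsIdempotentElem q) :
    q * p * q + (1 - q) * (1 - p) * (1 - q) = q * p + p * q - p - q + 1 := by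
  have hqq : q * q = q := hq
  noncomm_ring
  rw [hqq]
  abel

lemma IsSelfAdjoint.star_dr [StarRing R] (hp : IsSelfAdjoint p) (hq : IsSelfAdjoint q) :
    star (q * (2 • p - 1) + 1 - p) = (2 • p - 1) * q + 1 - p := by
  simp only [star_sub, star_add, star_mul, star_one, star_nsmul, hp.star_eq, hq.star_eq]

end Ring

/-- `T T* = P_V P_U P_V + P_{V^⊥} P_{U^⊥} P_{V^⊥}
= P_V P_U + P_U P_V − P_U − P_V + Id = P_U P_V P_U + P_{U^⊥} P_{V^⊥} P_{U^⊥}`. -/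
theorem drOperator_mul_adjoint
    (U V : Submodule ℝ X) [CompleteSpace U] [CompleteSpace V] :
    drOperator U V * ContinuousLinearMap.adjoint (drOperator U V) =
      proj V * proj U * proj V + proj Vᗮ * proj Uᗮ * proj Vᗮ ∧
    drOperator U V * ContinuousLinearMap.adjoint (drOperator U V) =
      proj V * proj U + proj U * proj V - proj U - proj V + 1 ∧
    drOperator U V * ContinuousLinearMap.adjoint (drOperator U V) =
      proj U * proj V * proj U + proj Uᗮ * proj Vᗮ * proj Uᗮ := by
  have hU : IsStarProjection (proj U) := isStarProjection_starProjection
  have hV : IsStarProjection (proj V) := isStarProjection_starProjection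
  have hUc : proj Uᗮ = 1 - proj U := U.starProjection_orthogonal'
  have hVc : proj Vᗮ = 1 - proj V := V.starProjection_orthogonal'
  have hTT : drOperator U V * ContinuousLinearMap.adjoint (drOperator U V) =
      proj V * proj U + proj U * proj V - proj U - proj V + 1 := by
    rw [← ContinuousLinearMap.star_eq_adjoint, drOperator,
      hU.isSelfAdjoint.star_dr hV.isSelfAdjoint,
      hU.isIdempotentElem.dr_mul_dr_transpose hV.isIdempotentElem]
  refine ⟨?_, hTT, ?_⟩
  · rw [hTT, hUc, hVc, hV.isIdempotentElem.mul_mul_self_add_one_sub_mul_mul_one_sub]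
  · rw [hTT, hUc, hVc, hU.isIdempotentElem.mul_mul_self_add_one_sub_mul_mul_one_sub]
    abel
end
end
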